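/- arXiv:2408.05046 — 5 statements merged into one kernel-verified Lean document; each statement's English description precedes it below -/
import Mathlib

section
/- Let M be a matroid with ground set E, total ordering ≺ of E, and rank function r. For any subset S ⊆ E, the nullity n(S) = |S| - r(S) equals the number of elements e of S such that e is the minimum (with respect to ≺) of some circuit C of M with C ⊆ S. -/
open Finset
open scoped Classical

variable {α : Type}

/-- Matroid rank axioms on the ground set given by the whole finite type `α`. -/
structure IsMatroidRank [DecidableEq α] [Fintype α] (r : Finset α → ℕ) : Prop where
  rank_le_card : ∀ S : Finset α, r S ≤ S.card
  mono : ∀ ⦃S T : Finset α⦄, S ⊆ T → r S ≤ r T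
  submod : ∀ S T : Finset α, r (S ∪ T) + r (S ∩ T) ≤ r S + r T

/-- A circuit of the matroid: a minimal dependent set. -/
def MCircuit [DecidableEq α] [Fintype α] (r : Finset α → ℕ) (C : Finset α) : Prop :=
  r C < C.card ∧ ∀ D ⊂ C, ¬ r D < D.card

section Aux

variable [DecidableEq α] [Fintype α] {r : Finset α → ℕ}

lemma rank_insert_le (hr : IsMatroidRank r) (e : α) (S : Finset α) :
    r (insert e S) ≤ r S + 1 := by
  have h := hr.submod S {e}
  have h1 : r {e} ≤ 1 := by simpa using hr.rank_le_card {e}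
  have h2 : S ∪ {e} = insert e S := by ext x; simp [or_comm]
  rw [h2] at h
  omega

lemma rank_union_le (hr : IsMatroidRank r) (A B : Finset α) :
    r (A ∪ B) ≤ r A + B.card := by
  induction B using Finset.induction_on with
  | empty => simpa using hr.mono (Finset.union_empty A).subset
  | @insert b B' hb ih =>
    have h1 : A ∪ insert b B' = insert b (A ∪ B') := by
      ext x
      simp only [Finset.mem_union, Finset.mem_insert]
      tauto
    rw [h1, Finset.card_insert_of_notMem hb]
    have := rank_insert_le hr b (A ∪ B')
    omega

lemma span_mono (hr : IsMatroidRank r) {e : α} {A B : Finset α}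
    (h : r (insert e A) = r A) (hAB : A ⊆ B) : r (insert e B) = r B := by
  have hsub := hr.submod (insert e A) B
  have hu : insert e A ∪ B = insert e B := by
    ext x
    simp only [Finset.mem_union, Finset.mem_insert]
    constructor
    · rintro ((rfl | h) | h)
      exacts [Or.inl rfl, Or.inr (hAB h), Or.inr h]
    · rintro (rfl | h)
      exacts [Or.inl (Or.inl rfl), Or.inr h]
  have hi : A ⊆ insert e A ∩ B := fun x hx => by
    simp [Finset.mem_insert, hAB hx, hx]
  have h1 : r A ≤ r (insert e A ∩ B) := hr.mono hi
  have h2 : r B ≤ r (insert e B) := hr.mono (Finset.subset_insert _ _)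
  rw [hu, h] at hsub
  omega

lemma indep_subset (hr : IsMatroidRank r) {B D : Finset α}
    (hB : r B = B.card) (hDB : D ⊆ B) : r D = D.card := by
  have h1 : B = D ∪ (B \ D) := by
    ext x; simp; tauto
  have h2 : r B ≤ r D + (B \ D).card := by
    have := rank_union_le hr D (B \ D)
    rwa [← h1] at this
  have h3 : (B \ D).card = B.card - D.card := Finset.card_sdiff_of_subset hDB
  have h4 : D.card ≤ B.card := Finset.card_le_card hDB
  have h5 : r D ≤ D.card := hr.rank_le_card D
  omega

lemma exists_circuit (hr : IsMatroidRank r) :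
    ∀ A : Finset α, r A < A.card → ∃ C ⊆ A, MCircuit r C := by
  intro A
  induction A using Finset.strongInductionOn with
  | _ A ih =>
    intro hA
    by_cases h : ∀ D ⊂ A, ¬ r D < D.card
    · exact ⟨A, Finset.Subset.refl A, hA, h⟩
    · push_neg at h
      obtain ⟨D, hD, hDdep⟩ := h
      obtain ⟨C, hCD, hC⟩ := ih D hD hDdep
      exact ⟨C, hCD.trans hD.subset, hC⟩

lemma exists_basis (hr : IsMatroidRank r) :
    ∀ S : Finset α, ∃ B ⊆ S, r B = B.card ∧ r B = r S := by
  intro S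
  induction S using Finset.strongInductionOn with
  | _ S ih =>
    by_cases h : r S = S.card
    · exact ⟨S, Finset.Subset.refl S, h, rfl⟩
    · have hdep : r S < S.card := lt_of_le_of_ne (hr.rank_le_card S) h
      obtain ⟨C, hCS, hC⟩ := exists_circuit hr S hdep
      have hCne : C.Nonempty := by
        rcases Finset.eq_empty_or_nonempty C with h' | h'
        · exfalso; rw [h'] at hC; simpa using hC.1
        · exact h'
      obtain ⟨e, he⟩ := hCne
      have heS : e ∈ S := hCS he
      -- r C = |C| - 1 and C.erase e is independent with card |C| - 1
      have herase : r (C.erase e) = (C.erase e).card := by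
        by_contra h'
        exact hC.2 (C.erase e) (Finset.erase_ssubset he)
          (lt_of_le_of_ne (hr.rank_le_card _) h')
      have hins : insert e (C.erase e) = C := Finset.insert_erase he
      have hcard : (C.erase e).card = C.card - 1 := Finset.card_erase_of_mem he
      have hCcard : 1 ≤ C.card := Finset.card_pos.mpr ⟨e, he⟩
      have hrC : r C = C.card - 1 := by
        have h1 : r (C.erase e) ≤ r C := hr.mono (Finset.erase_subset _ _)
        have h2 := hC.1
        omega
      have hspan : r (insert e (C.erase e)) = r (C.erase e) := by
        rw [hins]; omega
      have hsub : C.erase e ⊆ S.erase e := by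
        intro x hx
        simp only [Finset.mem_erase] at hx ⊢
        exact ⟨hx.1, hCS hx.2⟩
      have hspanS : r (insert e (S.erase e)) = r (S.erase e) :=
        span_mono hr hspan hsub
      rw [Finset.insert_erase heS] at hspanS
      obtain ⟨B, hBsub, hBi, hBr⟩ := ih (S.erase e) (Finset.erase_ssubset heS)
      exact ⟨B, hBsub.trans (Finset.erase_subset _ _), hBi, by omega⟩

lemma key_iff (hr : IsMatroidRank r) {e : α} {T : Finset α} (heT : e ∉ T) :
    r (insert e T) = r T ↔ ∃ C, MCircuit r C ∧ C ⊆ insert e T ∧ e ∈ C := by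
  constructor
  · intro h
    obtain ⟨B, hBsub, hBi, hBr⟩ := exists_basis hr T
    have h1 : r (insert e B) = r B := by
      have hle : r (insert e B) ≤ r (insert e T) :=
        hr.mono (Finset.insert_subset_insert _ hBsub)
      have hge : r B ≤ r (insert e B) := hr.mono (Finset.subset_insert _ _)
      omega
    have heB : e ∉ B := fun h' => heT (hBsub h')
    have hdep : r (insert e B) < (insert e B).card := by
      have hc : (insert e B).card = B.card + 1 := Finset.card_insert_of_notMem heB
      omega
    obtain ⟨C, hCsub, hC⟩ := exists_circuit hr _ hdep
    have heC : e ∈ C := by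
      by_contra h'
      have : C ⊆ B := fun x hx => by
        rcases Finset.mem_insert.mp (hCsub hx) with h'' | h''
        · exact absurd (h'' ▸ hx) h'
        · exact h''
      have h3 := indep_subset hr hBi this
      have h4 := hC.1
      omega
    exact ⟨C, hC, hCsub.trans (Finset.insert_subset_insert _ hBsub), heC⟩
  · rintro ⟨C, hC, hCsub, heC⟩
    have herase : r (C.erase e) = (C.erase e).card := by
      by_contra h'
      exact hC.2 (C.erase e) (Finset.erase_ssubset heC)
        (lt_of_le_of_ne (hr.rank_le_card _) h')
    have hins : insert e (C.erase e) = C := Finset.insert_erase heC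
    have hcard : (C.erase e).card = C.card - 1 := Finset.card_erase_of_mem heC
    have hCcard : 1 ≤ C.card := Finset.card_pos.mpr ⟨e, heC⟩
    have hrC : r C = C.card - 1 := by
      have h1 : r (C.erase e) ≤ r C := hr.mono (Finset.erase_subset _ _)
      have h2 := hC.1
      omega
    have hspan : r (insert e (C.erase e)) = r (C.erase e) := by
      rw [hins]; omega
    have hsub : C.erase e ⊆ T := by
      intro x hx
      simp only [Finset.mem_erase] at hx
      rcases Finset.mem_insert.mp (hCsub hx.2) with h' | h'
      · exact absurd h' hx.1
      · exact h'
    exact span_mono hr hspan hsub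

lemma count_aux [LinearOrder α] (hr : IsMatroidRank r) :
    ∀ S : Finset α, S.card - r S
      = (S.filter (fun e =>
          r (S.filter (fun f => e ≤ f)) = r (S.filter (fun f => e < f)))).card := by
  intro S
  induction S using Finset.strongInductionOn with
  | _ S ih =>
    rcases Finset.eq_empty_or_nonempty S with rfl | hS
    · simp
    · set m := S.min' hS with hm
      have hmS : m ∈ S := S.min'_mem hS
      set S' := S.erase m with hS'
      have hSS' : S = insert m S' := (Finset.insert_erase hmS).symm
      have hmS' : m ∉ S' := Finset.notMem_erase _ _
      have hcardS : S.card = S'.card + 1 := by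
        rw [hSS', Finset.card_insert_of_notMem hmS']
      -- filters at m
      have hfle : S.filter (fun f => m ≤ f) = S := by
        apply Finset.filter_true_of_mem
        intro x hx; exact S.min'_le x hx
      have hflt : S.filter (fun f => m < f) = S' := by
        ext x
        simp only [Finset.mem_filter, hS', Finset.mem_erase]
        constructor
        · rintro ⟨hx, hlt⟩; exact ⟨ne_of_gt hlt, hx⟩
        · rintro ⟨hne, hx⟩; exact ⟨hx, lt_of_le_of_ne (S.min'_le x hx) (Ne.symm hne)⟩
      -- for e ∈ S', filters over S equal filters over S'
      have hfilt : ∀ e ∈ S', ∀ p : α → Prop, (∀ f, p f → m < f) →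
          S.filter (fun f => e ≤ f ∧ p f) = S'.filter (fun f => e ≤ f ∧ p f) := by
        intro e he p hp
        ext x
        simp only [Finset.mem_filter, hS', Finset.mem_erase]
        constructor
        · rintro ⟨hx, hle, hpx⟩
          exact ⟨⟨ne_of_gt (hp x hpx), hx⟩, hle, hpx⟩
        · rintro ⟨⟨_, hx⟩, h2⟩; exact ⟨hx, h2⟩
      have hmlt : ∀ e ∈ S', m < e := by
        intro e he
        simp only [hS', Finset.mem_erase] at he
        exact lt_of_le_of_ne (S.min'_le e he.2) (Ne.symm he.1)
      have hfle' : ∀ e ∈ S', S.filter (fun f => e ≤ f) = S'.filter (fun f => e ≤ f) := by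
        intro e he
        ext x
        simp only [Finset.mem_filter, hS', Finset.mem_erase]
        constructor
        · rintro ⟨hx, hle⟩
          exact ⟨⟨ne_of_gt (lt_of_lt_of_le (hmlt e he) hle), hx⟩, hle⟩
        · rintro ⟨⟨_, hx⟩, hle⟩; exact ⟨hx, hle⟩
      have hflt' : ∀ e ∈ S', S.filter (fun f => e < f) = S'.filter (fun f => e < f) := by
        intro e he
        ext x
        simp only [Finset.mem_filter, hS', Finset.mem_erase]
        constructor
        · rintro ⟨hx, hlt⟩
          exact ⟨⟨ne_of_gt ((hmlt e he).trans hlt), hx⟩, hlt⟩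
        · rintro ⟨⟨_, hx⟩, hlt⟩; exact ⟨hx, hlt⟩
      -- the filtered set over S'
      have hcong : S'.filter (fun e =>
            r (S.filter (fun f => e ≤ f)) = r (S.filter (fun f => e < f)))
          = S'.filter (fun e =>
            r (S'.filter (fun f => e ≤ f)) = r (S'.filter (fun f => e < f))) := by
        apply Finset.filter_congr
        intro e he
        rw [hfle' e he, hflt' e he]
      have ihS' := ih S' (by rw [hSS']; exact Finset.ssubset_insert hmS')
      have hrS'le : r S' ≤ r S := hr.mono (by rw [hSS']; exact Finset.subset_insert _ _)
      have hrSle : r S ≤ r S' + 1 := by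
        rw [hSS']; exact rank_insert_le hr m S'
      have hrS'card : r S' ≤ S'.card := hr.rank_le_card S'
      -- split the filter over S = insert m S'
      rw [hSS', Finset.filter_insert]
      rw [← hSS']
      by_cases hcase : r (S.filter (fun f => m ≤ f)) = r (S.filter (fun f => m < f))
      · rw [if_pos hcase]
        rw [hfle, hflt] at hcase
        have hnotmem : m ∉ S'.filter (fun e =>
            r (S.filter (fun f => e ≤ f)) = r (S.filter (fun f => e < f))) :=
          fun h => hmS' (Finset.mem_filter.mp h).1
        rw [Finset.card_insert_of_notMem hnotmem, hcong, ← ihS']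
        omega
      · rw [if_neg hcase]
        rw [hfle, hflt] at hcase
        have : r S = r S' + 1 := by omega
        rw [hcong, ← ihS']
        omega

end Aux

/-- the nullity `|S| − r(S)` equals the number of elements of `S` that
are the `≺`-least element of some circuit contained in `S`. -/

theorem stmt_0 [DecidableEq α] [Fintype α] [LinearOrder α]
    (r : Finset α → ℕ) (hr : IsMatroidRank r) (S : Finset α) :
    S.card - r S
      = (S.filter (fun e => ∃ C : Finset α, MCircuit r C ∧ C ⊆ S ∧ e ∈ C ∧
          ∀ f ∈ C, e ≤ f)).card := by
  rw [count_aux hr S]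
  congr 1
  apply Finset.filter_congr
  intro e he
  have heT : e ∉ S.filter (fun f => e < f) := by
    simp only [Finset.mem_filter]
    exact fun h => lt_irrefl e h.2
  have hins : insert e (S.filter (fun f => e < f)) = S.filter (fun f => e ≤ f) := by
    ext x
    simp only [Finset.mem_insert, Finset.mem_filter]
    constructor
    · rintro (rfl | ⟨hx, hlt⟩)
      · exact ⟨he, le_refl _⟩
      · exact ⟨hx, le_of_lt hlt⟩
    · rintro ⟨hx, hle⟩
      rcases eq_or_lt_of_le hle with rfl | hlt
      · exact Or.inl rfl
      · exact Or.inr ⟨hx, hlt⟩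
  rw [← hins]
  rw [key_iff hr heT]
  constructor
  · rintro ⟨C, hC, hCsub, heC⟩
    refine ⟨C, hC, ?_, heC, ?_⟩
    · intro x hx
      rcases Finset.mem_insert.mp (hCsub hx) with rfl | h'
      · exact he
      · exact (Finset.mem_filter.mp h').1
    · intro f hf
      rcases Finset.mem_insert.mp (hCsub hf) with rfl | h'
      · exact le_refl _
      · exact le_of_lt (Finset.mem_filter.mp h').2
  · rintro ⟨C, hC, hCsub, heC, hmin⟩
    refine ⟨C, hC, ?_, heC⟩
    intro x hx
    rcases eq_or_ne x e with rfl | hne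
    · exact Finset.mem_insert_self _ _
    · exact Finset.mem_insert_of_mem (Finset.mem_filter.mpr
        ⟨hCsub hx, lt_of_le_of_ne (hmin x hx) (Ne.symm hne)⟩)
end

section
/- Let Z be a multimatroid and let C₁, C₂ be circuits of Z. Then C₁ ∪ C₂ cannot contain exactly one skew pair (i.e., exactly one pair of distinct elements lying in the same skew class). -/
open Finset

variable {U ι : Type}

section Defs
variable [DecidableEq U] [Fintype U] [DecidableEq ι] [Fintype ι]

/-- `S` is a subtransversal: it meets each skew class at most once.
Skew classes are the fibers of `cls : U → ι`. -/
def Subtransversal (cls : U → ι) (S : Finset U) : Prop :=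
  Set.InjOn cls ↑S

/-- The skew class with index `i`, as a finset. -/
def skewClass (cls : U → ι) (i : ι) : Finset U :=
  Finset.univ.filter (fun x => cls x = i)

/-- `T` is a transversal: it meets each skew class exactly once. -/
def Transversal (cls : U → ι) (T : Finset U) : Prop :=
  Subtransversal cls T ∧ ∀ i : ι, ∃ x ∈ T, cls x = i

/-- The multimatroid rank axioms for a rank function `r` on the carrier given by
`cls : U → ι` (whose fibers, assumed nonempty, are the skew classes).
The first three fields express axiom (R1) (each transversal carries a matroid),
and `axiomR2` is axiom (R2). -/
structure IsMultimatroid (cls : U → ι) (r : Finset U → ℕ) : Prop where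
  cls_surj : Function.Surjective cls
  rank_le_card : ∀ S, Subtransversal cls S → r S ≤ S.card
  mono : ∀ S T, Subtransversal cls T → S ⊆ T → r S ≤ r T
  submod : ∀ S T, Subtransversal cls (S ∪ T) → r (S ∪ T) + r (S ∩ T) ≤ r S + r T
  axiomR2 : ∀ S, ∀ x y : U, Subtransversal cls S → cls x = cls y → x ≠ y →
    (∀ u ∈ S, cls u ≠ cls x) →
    2 * r S + 1 ≤ r (insert x S) + r (insert y S)

/-- An independent set of the multimatroid. -/
def Indep (cls : U → ι) (r : Finset U → ℕ) (S : Finset U) : Prop :=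
  Subtransversal cls S ∧ r S = S.card

/-- A basis: a maximal independent subtransversal. -/
def MMBasis (cls : U → ι) (r : Finset U → ℕ) (B : Finset U) : Prop :=
  Indep cls r B ∧ ∀ S, Indep cls r S → B ⊆ S → S = B

/-- A circuit: a minimal dependent subtransversal. -/
def Circuit (cls : U → ι) (r : Finset U → ℕ) (C : Finset U) : Prop :=
  Subtransversal cls C ∧ r C < C.card ∧ ∀ D ⊂ C, ¬ r D < D.card

/-- Non-degenerate: every skew class has at least two elements. -/
def Nondegenerate (cls : U → ι) : Prop :=
  ∀ i : ι, 2 ≤ (skewClass cls i).card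

/-- An element is singular if its singleton has rank `0`. -/
def Singular (r : Finset U → ℕ) (e : U) : Prop := r {e} = 0

end Defs

section Order
variable [DecidableEq U] [Fintype U] [DecidableEq ι] [Fintype ι] [LinearOrder ι]

/-- The skew class `i` is active with respect to the transversal `T` (in
particular, with respect to a basis): there is a circuit `C` with
`C − ω_i ⊆ T` whose `≺`-least element lies in the class `i`. -/
def Active (cls : U → ι) (r : Finset U → ℕ) (T : Finset U) (i : ι) : Prop :=
  ∃ C, Circuit cls r C ∧ C \ skewClass cls i ⊆ T ∧
    ∃ m ∈ C, cls m = i ∧ ∀ x ∈ C, i ≤ cls x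

end Order

section Aux
variable [DecidableEq U] [Fintype U] [DecidableEq ι] [Fintype ι]

lemma circ_erase (cls : U → ι) (r : Finset U → ℕ) (hM : IsMultimatroid cls r)
    (C : Finset U) (hC : Circuit cls r C) (e : U) (he : e ∈ C) :
    r C = r (C.erase e) := by
  have hlt := hC.2.1
  have hmin := hC.2.2 (C.erase e) (Finset.erase_ssubset he)
  have hmono := hM.mono (C.erase e) C hC.1 (Finset.erase_subset _ _)
  have hcard : (C.erase e).card = C.card - 1 := Finset.card_erase_of_mem he
  have hpos : 1 ≤ C.card := Finset.card_pos.mpr ⟨e, he⟩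
  rw [hcard] at hmin
  omega

lemma key (cls : U → ι) (r : Finset U → ℕ) (hM : IsMultimatroid cls r)
    (C₁ C₂ : Finset U) (h1 : Circuit cls r C₁) (h2 : Circuit cls r C₂)
    (x y : U) (hne : x ≠ y) (hcls : cls x = cls y)
    (hx1 : x ∈ C₁) (hy2 : y ∈ C₂) (hx2 : x ∉ C₂) (hy1 : y ∉ C₁)
    (huniq : ∀ x' y' : U, x' ≠ y' → cls x' = cls y' → x' ∈ C₁ ∪ C₂ → y' ∈ C₁ ∪ C₂ →
        ({x', y'} : Finset U) = {x, y}) : False := by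
  classical
  set S : Finset U := (C₁ ∪ C₂) \ {x, y} with hS
  have hmemS : ∀ u, u ∈ S ↔ (u ∈ C₁ ∪ C₂) ∧ u ≠ x ∧ u ≠ y := by
    intro u
    simp [hS, Finset.mem_sdiff, Finset.mem_insert, not_or]
  have hxS : x ∉ S := by simp [hmemS]
  have hyS : y ∉ S := by simp [hmemS]
  -- insert x S is a subtransversal
  have hsubx : Subtransversal cls (insert x S) := by
    intro u hu v hv heq
    by_contra hne'
    have huD : u ∈ C₁ ∪ C₂ := by
      rcases Finset.mem_insert.mp hu with h | h
      · subst h; exact Finset.mem_union_left _ hx1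
      · exact ((hmemS u).mp h).1
    have hvD : v ∈ C₁ ∪ C₂ := by
      rcases Finset.mem_insert.mp hv with h | h
      · subst h; exact Finset.mem_union_left _ hx1
      · exact ((hmemS v).mp h).1
    have := huniq u v hne' heq huD hvD
    have hy : y ∈ ({u, v} : Finset U) := by rw [this]; simp
    have : y ∉ (insert x S : Finset U) := by
      simp only [Finset.mem_insert]
      push_neg
      exact ⟨Ne.symm hne, hyS⟩
    rcases Finset.mem_insert.mp hy with h | h
    · exact this (h ▸ hu)
    · exact this ((Finset.mem_singleton.mp h) ▸ hv)
  have hsuby : Subtransversal cls (insert y S) := by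
    intro u hu v hv heq
    by_contra hne'
    have huD : u ∈ C₁ ∪ C₂ := by
      rcases Finset.mem_insert.mp hu with h | h
      · subst h; exact Finset.mem_union_right _ hy2
      · exact ((hmemS u).mp h).1
    have hvD : v ∈ C₁ ∪ C₂ := by
      rcases Finset.mem_insert.mp hv with h | h
      · subst h; exact Finset.mem_union_right _ hy2
      · exact ((hmemS v).mp h).1
    have := huniq u v hne' heq huD hvD
    have hx' : x ∈ ({u, v} : Finset U) := by rw [this]; simp
    have : x ∉ (insert y S : Finset U) := by
      simp only [Finset.mem_insert]
      push_neg
      exact ⟨hne, hxS⟩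
    rcases Finset.mem_insert.mp hx' with h | h
    · exact this (h ▸ hu)
    · exact this ((Finset.mem_singleton.mp h) ▸ hv)
  have hSsub : Subtransversal cls S :=
    Set.InjOn.mono (by intro u hu; simp only [Finset.coe_insert, Set.mem_insert_iff]; tauto) hsubx
  -- union/intersection identities
  have hun1 : C₁ ∪ S = insert x S := by
    ext u
    simp only [Finset.mem_union, Finset.mem_insert, hmemS]
    constructor
    · rintro (h | h)
      · by_cases hux : u = x
        · left; exact hux
        · right
          refine ⟨Or.inl h, hux, ?_⟩
          rintro rfl; exact hy1 h
      · right; exact h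
    · rintro (rfl | h)
      · left; exact hx1
      · right; exact h
  have hint1 : C₁ ∩ S = C₁.erase x := by
    ext u
    simp only [Finset.mem_inter, Finset.mem_erase, hmemS]
    constructor
    · rintro ⟨h, _, hux, _⟩; exact ⟨hux, h⟩
    · rintro ⟨hux, h⟩
      refine ⟨h, Finset.mem_union_left _ h, hux, ?_⟩
      rintro rfl; exact hy1 h
  have hun2 : C₂ ∪ S = insert y S := by
    ext u
    simp only [Finset.mem_union, Finset.mem_insert, hmemS]
    constructor
    · rintro (h | h)
      · by_cases huy : u = y
        · left; exact huy
        · right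
          refine ⟨Or.inr h, ?_, huy⟩
          rintro rfl; exact hx2 h
      · right; exact h
    · rintro (rfl | h)
      · left; exact hy2
      · right; exact h
  have hint2 : C₂ ∩ S = C₂.erase y := by
    ext u
    simp only [Finset.mem_inter, Finset.mem_erase, hmemS]
    constructor
    · rintro ⟨h, _, _, huy⟩; exact ⟨huy, h⟩
    · rintro ⟨huy, h⟩
      refine ⟨h, Finset.mem_union_right _ h, ?_, huy⟩
      rintro rfl; exact hx2 h
  -- submodularity gives the two rank bounds
  have hsm1 := hM.submod C₁ S (by rw [hun1]; exact hsubx)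
  rw [hun1, hint1] at hsm1
  have he1 := circ_erase cls r hM C₁ h1 x hx1
  have hb1 : r (insert x S) ≤ r S := by omega
  have hsm2 := hM.submod C₂ S (by rw [hun2]; exact hsuby)
  rw [hun2, hint2] at hsm2
  have he2 := circ_erase cls r hM C₂ h2 y hy2
  have hb2 : r (insert y S) ≤ r S := by omega
  -- no element of S lies in the class of x
  have hclass : ∀ u ∈ S, cls u ≠ cls x := by
    intro u hu h
    have huD := ((hmemS u).mp hu).1
    have hux : u ≠ x := ((hmemS u).mp hu).2.1
    have huy : u ≠ y := ((hmemS u).mp hu).2.2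
    have := huniq u x hux h huD (Finset.mem_union_left _ hx1)
    have : u ∈ ({x, y} : Finset U) := by rw [← this]; simp
    rcases Finset.mem_insert.mp this with h' | h'
    · exact hux h'
    · exact huy (Finset.mem_singleton.mp h')
  have := hM.axiomR2 S x y hSsub hcls hne hclass
  omega

end Aux

/-- the union of two circuits cannot contain exactly one skew pair. -/
theorem stmt_5 [DecidableEq U] [Fintype U] [DecidableEq ι] [Fintype ι]
    (cls : U → ι) (r : Finset U → ℕ) (hM : IsMultimatroid cls r)
    (C₁ C₂ : Finset U) (h1 : Circuit cls r C₁) (h2 : Circuit cls r C₂) :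
    ¬ ∃ x y : U, x ≠ y ∧ cls x = cls y ∧ x ∈ C₁ ∪ C₂ ∧ y ∈ C₁ ∪ C₂ ∧
      ∀ x' y' : U, x' ≠ y' → cls x' = cls y' → x' ∈ C₁ ∪ C₂ → y' ∈ C₁ ∪ C₂ →
        ({x', y'} : Finset U) = {x, y} := by
  rintro ⟨x, y, hne, hcls, hxD, hyD, huniq⟩
  rcases Finset.mem_union.mp hxD with hx1 | hx2
  · have hy1 : y ∉ C₁ := fun hy1 => hne (h1.1 (by exact_mod_cast hx1) (by exact_mod_cast hy1) hcls)
    have hy2 : y ∈ C₂ := (Finset.mem_union.mp hyD).resolve_left hy1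
    have hx2 : x ∉ C₂ := fun hx2 => hne (h2.1 (by exact_mod_cast hx2) (by exact_mod_cast hy2) hcls)
    exact key cls r hM C₁ C₂ h1 h2 x y hne hcls hx1 hy2 hx2 hy1 huniq
  · have hy2 : y ∉ C₂ := fun hy2 => hne (h2.1 (by exact_mod_cast hx2) (by exact_mod_cast hy2) hcls)
    have hy1 : y ∈ C₁ := (Finset.mem_union.mp hyD).resolve_right hy2
    have hx1 : x ∉ C₁ := fun hx1 => hne (h1.1 (by exact_mod_cast hx1) (by exact_mod_cast hy1) hcls)
    refine key cls r hM C₂ C₁ h2 h1 x y hne hcls hx2 hy1 hx1 hy2 ?_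
    intro a b h1 h2 h3 h4
    exact huniq a b h1 h2 (by rw [Finset.union_comm]; exact h3) (by rw [Finset.union_comm]; exact h4)
end

section
/- Let Z be a multimatroid, B a basis of Z, and ω a skew class. Then B ∪ ω contains at most one circuit of Z. -/
open Finset

variable {U ι : Type}

/-!
A circuit inside `B ∪ ω` is not contained in the independent set `B`, so it meets `ω` in a
single element `x` and the rest of it lies in `B`. Let `S ⊆ B` be the union of two distinct such
circuits `C₁, C₂` minus their elements `x₁, x₂` of `ω`; it is independent. If `x₁ = x₂`, circuit
elimination makes `(C₁ ∪ C₂) - x₁ = S` dependent. If `x₁ ≠ x₂`, both `S + x₁` and `S + x₂` contain a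
circuit, so each has rank `|S|`, and axiom (R2) fails for the skew pair `{x₁, x₂}`.
-/

section

variable {cls : U → ι} {r : Finset U → ℕ}

lemma Subtransversal.subset {S T : Finset U} (hT : Subtransversal cls T) (h : S ⊆ T) :
    Subtransversal cls S :=
  Set.InjOn.mono (coe_subset.mpr h) hT

variable [DecidableEq U]

namespace Subtransversal

lemma insert {S : Finset U} {x : U} (hS : Subtransversal cls S)
    (hx : ∀ u ∈ S, cls u ≠ cls x) : Subtransversal cls (insert x S) := by
  rw [Subtransversal, coe_insert, Set.injOn_insert (fun h => hx x h rfl)]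
  exact ⟨hS, fun ⟨u, hu, hux⟩ => hx u hu hux⟩

lemma cls_ne_of_mem_erase {C : Finset U} {x y : U} (hC : Subtransversal cls C) (hx : x ∈ C)
    (hy : y ∈ C.erase x) : cls y ≠ cls x := fun h =>
  (mem_erase.mp hy).1 (hC (mem_coe.mpr (mem_of_mem_erase hy)) (mem_coe.mpr hx) h)

end Subtransversal

namespace IsMultimatroid

variable (hM : IsMultimatroid cls r)
include hM

lemma rank_union_le_add_card (S A : Finset U) (h : Subtransversal cls (S ∪ A)) :
    r (S ∪ A) ≤ r S + #A := by
  induction A using Finset.induction_on with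
  | empty => simp
  | insert a A ha ih =>
    have hsplit : S ∪ insert a A = (S ∪ A) ∪ {a} := by
      rw [union_insert, insert_eq, union_comm {a}]
    rw [hsplit] at h ⊢
    have hsm := hM.submod (S ∪ A) {a} h
    have ha_le : r {a} ≤ 1 := by
      simpa using hM.rank_le_card {a} (h.subset subset_union_right)
    have hA := ih (h.subset subset_union_left)
    rw [card_insert_of_notMem ha]
    omega

lemma rank_lt_card_of_subset {D T : Finset U} (hT : Subtransversal cls T)
    (hD : r D < #D) (hDT : D ⊆ T) : r T < #T := by
  have hle := hM.rank_union_le_add_card D (T \ D) (by rwa [union_sdiff_of_subset hDT])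
  rw [union_sdiff_of_subset hDT] at hle
  have hcard := card_sdiff_add_card_eq_card hDT
  omega

lemma indep_of_subset {B S : Finset U} (hB : Indep cls r B) (h : S ⊆ B) : Indep cls r S :=
  ⟨hB.1.subset h, le_antisymm (hM.rank_le_card S (hB.1.subset h))
    (not_lt.mp fun hlt => (hM.rank_lt_card_of_subset hB.1 hlt h).ne hB.2)⟩

lemma circuit_rank_eq_card_of_ssubset {C D : Finset U} (hC : Circuit cls r C) (hD : D ⊂ C) :
    r D = #D :=
  le_antisymm (hM.rank_le_card D (hC.1.subset hD.subset)) (not_lt.mp (hC.2.2 D hD))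

lemma circuit_rank_add_one {C : Finset U} (hC : Circuit cls r C) : r C + 1 = #C := by
  obtain ⟨e, he⟩ : C.Nonempty := card_pos.mp (by have := hC.2.1; omega)
  have hrank := hM.circuit_rank_eq_card_of_ssubset hC (erase_ssubset he)
  have hmono := hM.mono (C.erase e) C hC.1 (erase_subset e C)
  have hcard := card_erase_of_mem he
  have := hC.2.1
  omega

lemma rank_insert_le_card_of_circuit {C S : Finset U} {x : U} (hC : Circuit cls r C)
    (hxC : x ∈ C) (hCS : C.erase x ⊆ S) (hxS : x ∉ S) (hT : Subtransversal cls (insert x S)) :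
    r (insert x S) ≤ #S := by
  have hlt := hM.rank_lt_card_of_subset hT hC.2.1 (insert_erase hxC ▸ insert_subset_insert x hCS)
  rw [card_insert_of_notMem hxS] at hlt
  omega

lemma circuit_elim {C₁ C₂ : Finset U} (hC₁ : Circuit cls r C₁) (hC₂ : Circuit cls r C₂)
    (hne : C₁ ≠ C₂) {x : U} (hx : x ∈ C₁) (hU : Subtransversal cls (C₁ ∪ C₂)) :
    r ((C₁ ∪ C₂).erase x) < #((C₁ ∪ C₂).erase x) := by
  have hinter : C₁ ∩ C₂ ⊂ C₁ := by
    refine Finset.ssubset_iff_subset_ne.mpr ⟨inter_subset_left, fun h => ?_⟩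
    exact hC₂.2.2 C₁ ((inter_eq_left.mp h).ssubset_of_ne hne) hC₁.2.1
  have hsm := hM.submod C₁ C₂ hU
  have hr₁ := hM.circuit_rank_add_one hC₁
  have hr₂ := hM.circuit_rank_add_one hC₂
  have hrI := hM.circuit_rank_eq_card_of_ssubset hC₁ hinter
  have hmono := hM.mono _ _ hU (erase_subset x (C₁ ∪ C₂))
  have hcardE := card_erase_of_mem (mem_union_left C₂ hx)
  have hcardU := card_inter_add_card_union C₁ C₂
  have hpos := card_pos.mpr ⟨x, mem_union_left C₂ hx⟩
  omega

lemma exists_erase_subset_of_circuit_subset [Fintype U] [DecidableEq ι] {B C : Finset U} {i : ι}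
    (hB : Indep cls r B) (hC : Circuit cls r C) (hCB : C ⊆ B ∪ skewClass cls i) :
    ∃ x ∈ C, cls x = i ∧ C.erase x ⊆ B := by
  obtain ⟨x, hxC, hxB⟩ := not_subset.mp fun h => (hM.indep_of_subset hB h).2.not_lt hC.2.1
  have hxi : cls x = i := by
    simpa [skewClass, hxB] using hCB hxC
  refine ⟨x, hxC, hxi, fun y hy => ?_⟩
  have hyi : cls y ≠ i := hxi ▸ hC.1.cls_ne_of_mem_erase hxC hy
  simpa [skewClass, hyi] using hCB (mem_of_mem_erase hy)

end IsMultimatroid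

end

theorem stmt_6_general [DecidableEq U] [Fintype U] [DecidableEq ι]
    (cls : U → ι) (r : Finset U → ℕ) (hM : IsMultimatroid cls r)
    (B : Finset U) (hB : MMBasis cls r B) (i : ι) :
    ∀ C₁ C₂ : Finset U, Circuit cls r C₁ → Circuit cls r C₂ →
      C₁ ⊆ B ∪ skewClass cls i → C₂ ⊆ B ∪ skewClass cls i → C₁ = C₂ := by
  intro C₁ C₂ hC₁ hC₂ h₁ h₂
  by_contra hne
  obtain ⟨x₁, hx₁, hx₁i, hE₁⟩ := hM.exists_erase_subset_of_circuit_subset hB.1 hC₁ h₁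
  obtain ⟨x₂, hx₂, hx₂i, hE₂⟩ := hM.exists_erase_subset_of_circuit_subset hB.1 hC₂ h₂
  set S := C₁.erase x₁ ∪ C₂.erase x₂ with hS
  have hSi : ∀ u ∈ S, cls u ≠ i := by
    simp only [hS, mem_union]
    rintro u (hu | hu)
    exacts [hx₁i ▸ hC₁.1.cls_ne_of_mem_erase hx₁ hu, hx₂i ▸ hC₂.1.cls_ne_of_mem_erase hx₂ hu]
  have hS_indep : Indep cls r S := hM.indep_of_subset hB.1 (union_subset hE₁ hE₂)
  have hins : ∀ x, cls x = i → Subtransversal cls (insert x S) := fun x hx =>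
    hS_indep.1.insert fun u hu => hx ▸ hSi u hu
  rcases eq_or_ne x₁ x₂ with rfl | hx
  · have hU : C₁ ∪ C₂ = insert x₁ S := by
      rw [hS, insert_union_distrib, insert_erase hx₁, insert_erase hx₂]
    have hdep := hM.circuit_elim hC₁ hC₂ hne hx₁ (hU ▸ hins x₁ hx₁i)
    rw [erase_union_distrib] at hdep
    exact hdep.ne hS_indep.2
  · have hR2 := hM.axiomR2 S x₁ x₂ hS_indep.1 (hx₁i.trans hx₂i.symm) hx
      fun u hu => hx₁i ▸ hSi u hu
    have hb₁ := hM.rank_insert_le_card_of_circuit (S := S) hC₁ hx₁ subset_union_left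
      (fun h => hSi x₁ h hx₁i) (hins x₁ hx₁i)
    have hb₂ := hM.rank_insert_le_card_of_circuit (S := S) hC₂ hx₂ subset_union_right
      (fun h => hSi x₂ h hx₂i) (hins x₂ hx₂i)
    have := hS_indep.2
    omega

/-- for a basis `B` and a skew class `ω`, the set `B ∪ ω` contains at
most one circuit. -/
theorem stmt_6 [DecidableEq U] [Fintype U] [DecidableEq ι] [Fintype ι]
    (cls : U → ι) (r : Finset U → ℕ) (hM : IsMultimatroid cls r)
    (B : Finset U) (hB : MMBasis cls r B) (i : ι) :
    ∀ C₁ C₂ : Finset U, Circuit cls r C₁ → Circuit cls r C₂ →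
      C₁ ⊆ B ∪ skewClass cls i → C₂ ⊆ B ∪ skewClass cls i → C₁ = C₂ :=
  stmt_6_general cls r hM B hB i
end

section
/- Let Z be a non-degenerate multimatroid, B a basis of Z, and ω a skew class such that the fundamental circuit C(B,ω) exists. Then an element f of B − ω lies in C(B,ω) if and only if the skew class ω' containing f has an element x such that B △ {B_ω, B̲_ω, f, x} is a basis of Z, where B_ω is the unique element of B ∩ ω and B̲_ω is the unique element of C(B,ω) − B. -/
open Finset

variable {U ι : Type}

section Aux
variable [DecidableEq U] [Fintype U] [DecidableEq ι] [Fintype ι]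
variable {cls : U → ι} {r : Finset U → ℕ}
set_option linter.unusedSectionVars false

lemma subtr_mono {S T : Finset U} (h : Subtransversal cls T) (hST : S ⊆ T) :
    Subtransversal cls S :=
  Set.InjOn.mono (by exact_mod_cast hST) h

lemma rank_empty (hM : IsMultimatroid cls r) : r ∅ = 0 := by
  have := hM.rank_le_card ∅ (by intro a ha; simp at ha)
  simpa using this

lemma indep_subset_s7 (hM : IsMultimatroid cls r) {S T : Finset U}
    (hS : Indep cls r S) (hTS : T ⊆ S) : Indep cls r T := by
  obtain ⟨hsub, hcard⟩ := hS
  refine ⟨subtr_mono hsub hTS, ?_⟩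
  have hU : T ∪ (S \ T) = S := Finset.union_sdiff_of_subset hTS
  have hI : T ∩ (S \ T) = ∅ := by
    ext a; simp only [Finset.mem_inter, Finset.mem_sdiff, Finset.notMem_empty, iff_false]
    tauto
  have hsm := hM.submod T (S \ T) (by rw [hU]; exact hsub)
  rw [hU, hI, rank_empty hM] at hsm
  have h1 : r T ≤ T.card := hM.rank_le_card T (subtr_mono hsub hTS)
  have h2 : r (S \ T) ≤ (S \ T).card :=
    hM.rank_le_card _ (subtr_mono hsub (Finset.sdiff_subset))
  have h5 : T.card ≤ S.card := Finset.card_le_card hTS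
  have h3 : T.card + (S \ T).card = S.card := by
    rw [Finset.card_sdiff_of_subset hTS]; omega
  omega

lemma unit_increase (hM : IsMultimatroid cls r) {S : Finset U} {z : U}
    (h : Subtransversal cls (insert z S)) : r (insert z S) ≤ r S + 1 := by
  have hsm := hM.submod S {z} (by rwa [Finset.union_comm, ← Finset.insert_eq])
  rw [Finset.union_comm, ← Finset.insert_eq] at hsm
  have h1 : r {z} ≤ 1 := by
    have := hM.rank_le_card {z} (by intro a ha b hb _; simp at ha hb; rw [ha, hb])
    simpa using this
  omega

lemma extend_indep (hM : IsMultimatroid cls r) (hnd : Nondegenerate cls)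
    {S : Finset U} (j : ι) (hI : Indep cls r S) (hj : ∀ u ∈ S, cls u ≠ j) :
    ∃ x, cls x = j ∧ x ∉ S ∧ Indep cls r (insert x S) := by
  obtain ⟨hsub, hcard⟩ := hI
  have h2 := hnd j
  obtain ⟨x, hx, y, hy, hxy⟩ := Finset.one_lt_card.mp h2
  simp only [skewClass, Finset.mem_filter, Finset.mem_univ, true_and] at hx hy
  have hR2 := hM.axiomR2 S x y hsub (hx.trans hy.symm) hxy (by rw [hx]; exact hj)
  have hsubx : Subtransversal cls (insert x S) := by
    intro a ha b hb hab
    simp only [Finset.coe_insert, Set.mem_insert_iff] at ha hb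
    rcases ha with ha | ha <;> rcases hb with hb | hb
    · rw [ha, hb]
    · subst ha; exact absurd (hab.symm.trans hx) (hj b hb)
    · subst hb; exact absurd (hab.trans hx) (hj a ha)
    · exact hsub ha hb hab
  have hsuby : Subtransversal cls (insert y S) := by
    intro a ha b hb hab
    simp only [Finset.coe_insert, Set.mem_insert_iff] at ha hb
    rcases ha with ha | ha <;> rcases hb with hb | hb
    · rw [ha, hb]
    · subst ha; exact absurd (hab.symm.trans hy) (hj b hb)
    · subst hb; exact absurd (hab.trans hy) (hj a ha)
    · exact hsub ha hb hab
  have hux := unit_increase hM hsubx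
  have huy := unit_increase hM hsuby
  have hxS : x ∉ S := fun h => hj x h hx
  have hyS : y ∉ S := fun h => hj y h hy
  have : r (insert x S) = r S + 1 ∨ r (insert y S) = r S + 1 := by omega
  rcases this with h | h
  · exact ⟨x, hx, hxS, hsubx, by rw [h, Finset.card_insert_of_notMem hxS, hcard]⟩
  · exact ⟨y, hy, hyS, hsuby, by rw [h, Finset.card_insert_of_notMem hyS, hcard]⟩

lemma indep_transversal_basis {T : Finset U}
    (hT : Transversal cls T) (hI : Indep cls r T) : MMBasis cls r T := by
  refine ⟨hI, fun S hS hTS => ?_⟩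
  apply Finset.Subset.antisymm _ hTS
  intro s hs
  obtain ⟨t, ht, hct⟩ := hT.2 (cls s)
  have : t = s := hS.1 (by exact_mod_cast hTS ht) (by exact_mod_cast hs) hct
  rwa [← this]

lemma basis_transversal (hM : IsMultimatroid cls r) (hnd : Nondegenerate cls)
    {B : Finset U} (hB : MMBasis cls r B) : Transversal cls B := by
  refine ⟨hB.1.1, fun j => ?_⟩
  by_contra h
  push_neg at h
  obtain ⟨x, hx, hxS, hxI⟩ := extend_indep hM hnd j hB.1 (fun u hu => h u hu)
  have := hB.2 _ hxI (Finset.subset_insert x B)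
  exact hxS (this ▸ Finset.mem_insert_self x B)

end Aux

/-- membership of `f ∈ B − ω` in the fundamental circuit `C(B,ω)`,
characterized via basis exchange. Here `C` is the fundamental circuit (the unique
circuit in `B ∪ ω`), `bω` is the unique element of `B ∩ ω` and `bu` the unique
element of `C − B`. -/
theorem stmt_7 [DecidableEq U] [Fintype U] [DecidableEq ι] [Fintype ι]
    (cls : U → ι) (r : Finset U → ℕ) (hM : IsMultimatroid cls r)
    (hnd : Nondegenerate cls) (B : Finset U) (hB : MMBasis cls r B)
    (i : ι) (C : Finset U) (hC : Circuit cls r C) (hCsub : C ⊆ B ∪ skewClass cls i)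
    (bω : U) (hbω : bω ∈ B) (hbωi : cls bω = i)
    (bu : U) (hbuC : bu ∈ C) (hbuB : bu ∉ B)
    (f : U) (hf : f ∈ B) (hfi : cls f ≠ i) :
    f ∈ C ↔ ∃ x : U, cls x = cls f ∧
      MMBasis cls r (symmDiff B ({bω, bu, f, x} : Finset U)) := by
  have hBtr := basis_transversal hM hnd hB
  have hbui : cls bu = i := by
    rcases Finset.mem_union.mp (hCsub hbuC) with h | h
    · exact absurd h hbuB
    · simpa [skewClass] using h
  have hclsB : ∀ b ∈ B, cls b = i → b = bω := fun b hb hbi =>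
    hB.1.1 (Finset.mem_coe.mpr hb) (Finset.mem_coe.mpr hbω) (hbi.trans hbωi.symm)
  have hfbω : f ≠ bω := fun h => hfi (h ▸ hbωi)
  have hfbu : f ≠ bu := fun h => hbuB (h ▸ hf)
  have hCB : ∀ c ∈ C, c ≠ bu → c ∈ B ∧ c ≠ bω := by
    intro c hc hcbu
    by_cases hci : cls c = i
    · exact absurd (hC.1 (Finset.mem_coe.mpr hc) (Finset.mem_coe.mpr hbuC)
        (hci.trans hbui.symm)) hcbu
    · rcases Finset.mem_union.mp (hCsub hc) with h | h
      · exact ⟨h, fun he => hci (he ▸ hbωi)⟩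
      · simp only [skewClass, Finset.mem_filter, Finset.mem_univ, true_and] at h
        exact absurd h hci
  constructor
  · intro hfC
    set T : Finset U := insert bu (B.erase bω) with hT
    have hTmem : ∀ a, a ∈ T ↔ a = bu ∨ (a ≠ bω ∧ a ∈ B) := by
      intro a; rw [hT]; simp [Finset.mem_insert, Finset.mem_erase]
    have hTsub : Subtransversal cls T := by
      intro a ha b hb hab
      rw [Finset.mem_coe, hTmem] at ha hb
      rcases ha with rfl | ⟨habω, haB⟩ <;> rcases hb with rfl | ⟨hbbω, hbB⟩
      · rfl
      · exact absurd (hclsB b hbB (hab.symm.trans hbui)) hbbω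
      · exact absurd (hclsB a haB (hab.trans hbui)) habω
      · exact hB.1.1 (Finset.mem_coe.mpr haB) (Finset.mem_coe.mpr hbB) hab
    have hTcov : ∀ j, ∃ u ∈ T, cls u = j := by
      intro j
      obtain ⟨b, hbB, hbj⟩ := hBtr.2 j
      by_cases hbbω : b = bω
      · subst hbbω
        exact ⟨bu, (hTmem bu).mpr (Or.inl rfl), hbui.trans (hbωi.symm.trans hbj)⟩
      · exact ⟨b, (hTmem b).mpr (Or.inr ⟨hbbω, hbB⟩), hbj⟩
    have hbuE : bu ∉ B.erase bω := fun h => hbuB (Finset.mem_of_mem_erase h)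
    have hBcard1 : 1 ≤ B.card := Finset.card_pos.mpr ⟨bω, hbω⟩
    have hEcard := Finset.card_erase_of_mem hbω
    have hTcard : T.card = B.card := by
      rw [hT, Finset.card_insert_of_notMem hbuE, hEcard]; omega
    have hEr : r (B.erase bω) = (B.erase bω).card :=
      (indep_subset_s7 hM hB.1 (Finset.erase_subset _ _)).2
    have hrTge : r (B.erase bω) ≤ r T :=
      hM.mono _ T hTsub (hT ▸ Finset.subset_insert _ _)
    have hrTle : r T ≤ T.card := hM.rank_le_card T hTsub
    have hCsubT : C ⊆ T := by
      intro c hc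
      by_cases hcbu : c = bu
      · exact (hTmem c).mpr (Or.inl hcbu)
      · obtain ⟨h1, h2⟩ := hCB c hc hcbu
        exact (hTmem c).mpr (Or.inr ⟨h2, h1⟩)
    have hClt := hC.2.1
    have hne : r T ≠ B.card := by
      intro h
      have hTind : Indep cls r T := ⟨hTsub, by rw [h, hTcard]⟩
      have hTbasis := indep_transversal_basis ⟨hTsub, hTcov⟩ hTind
      exact Nat.ne_of_lt hClt (indep_subset_s7 hM hTind hCsubT).2
    have hrT : r T + 1 = B.card := by omega
    have hCf := hC.2.2 (C.erase f) (Finset.erase_ssubset hfC)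
    have hCfle := hM.rank_le_card (C.erase f) (subtr_mono hC.1 (Finset.erase_subset f C))
    have hCfcard := Finset.card_erase_add_one hfC
    have hCmono : r (C.erase f) ≤ r C := hM.mono _ _ hC.1 (Finset.erase_subset _ _)
    have hfT : f ∈ T := (hTmem f).mpr (Or.inr ⟨hfbω, hf⟩)
    have hUeq : T.erase f ∪ C = T := by
      apply Finset.Subset.antisymm
      · exact Finset.union_subset (Finset.erase_subset _ _) hCsubT
      · intro t ht
        by_cases htf : t = f
        · exact Finset.mem_union_right _ (htf ▸ hfC)
        · exact Finset.mem_union_left _ (Finset.mem_erase.mpr ⟨htf, ht⟩)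
    have hIeq : T.erase f ∩ C = C.erase f := by
      ext a
      simp only [Finset.mem_inter, Finset.mem_erase]
      constructor
      · rintro ⟨⟨h1, _⟩, h3⟩; exact ⟨h1, h3⟩
      · rintro ⟨h1, h2⟩; exact ⟨⟨h1, hCsubT h2⟩, h2⟩
    have hsm := hM.submod (T.erase f) C (by rw [hUeq]; exact hTsub)
    rw [hUeq, hIeq] at hsm
    have hS0le := hM.rank_le_card (T.erase f) (subtr_mono hTsub (Finset.erase_subset _ _))
    have hS0card := Finset.card_erase_add_one hfT
    have hS0 : Indep cls r (T.erase f) :=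
      ⟨subtr_mono hTsub (Finset.erase_subset _ _), by omega⟩
    have hj : ∀ u ∈ T.erase f, cls u ≠ cls f := by
      intro u hu
      obtain ⟨huf, huT⟩ := Finset.mem_erase.mp hu
      rcases (hTmem u).mp huT with rfl | ⟨hubω, huB⟩
      · rw [hbui]; exact fun h => hfi h.symm
      · intro h
        exact huf (hB.1.1 (Finset.mem_coe.mpr huB) (Finset.mem_coe.mpr hf) h)
    obtain ⟨x, hx, hxS0, hxI⟩ := extend_indep hM hnd (cls f) hS0 hj
    have hxf : x ≠ f := by
      rintro rfl
      rw [Finset.insert_erase hfT] at hxI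
      have := hxI.2
      omega
    have hxB : x ∉ B := fun h =>
      hxf (hB.1.1 (Finset.mem_coe.mpr h) (Finset.mem_coe.mpr hf) hx)
    have hcov2 : ∀ j, ∃ u ∈ insert x (T.erase f), cls u = j := by
      intro j
      obtain ⟨b, hbB, hbj⟩ := hBtr.2 j
      by_cases hbf : b = f
      · exact ⟨x, Finset.mem_insert_self _ _, hx.trans (hbf ▸ hbj)⟩
      by_cases hbbω : b = bω
      · subst hbbω
        exact ⟨bu, Finset.mem_insert_of_mem (Finset.mem_erase.mpr
          ⟨Ne.symm hfbu, (hTmem bu).mpr (Or.inl rfl)⟩), hbui.trans (hbωi.symm.trans hbj)⟩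
      · exact ⟨b, Finset.mem_insert_of_mem (Finset.mem_erase.mpr
          ⟨hbf, (hTmem b).mpr (Or.inr ⟨hbbω, hbB⟩)⟩), hbj⟩
    have hbasis := indep_transversal_basis ⟨hxI.1, hcov2⟩ hxI
    refine ⟨x, hx, ?_⟩
    have hset : symmDiff B ({bω, bu, f, x} : Finset U) = insert x (T.erase f) := by
      ext a
      simp only [Finset.mem_symmDiff, Finset.mem_insert, Finset.mem_singleton,
        Finset.mem_erase, hTmem]
      constructor
      · rintro (⟨haB, hA⟩ | ⟨(rfl | rfl | rfl | rfl), haB⟩)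
        · push_neg at hA
          exact Or.inr ⟨hA.2.2.1, Or.inr ⟨hA.1, haB⟩⟩
        · exact absurd hbω haB
        · exact Or.inr ⟨Ne.symm hfbu, Or.inl rfl⟩
        · exact absurd hf haB
        · exact Or.inl rfl
      · rintro (rfl | ⟨haf, (rfl | ⟨habω, haB⟩)⟩)
        · exact Or.inr ⟨Or.inr (Or.inr (Or.inr rfl)), hxB⟩
        · exact Or.inr ⟨Or.inr (Or.inl rfl), hbuB⟩
        · refine Or.inl ⟨haB, ?_⟩
          push_neg
          exact ⟨habω, fun h => hbuB (h ▸ haB), haf, fun h => hxB (h ▸ haB)⟩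
    rw [hset]; exact hbasis
  · rintro ⟨x, hx, hB'⟩
    by_cases hxB : x ∈ B
    · exfalso
      have hxf : x = f := hB.1.1 (Finset.mem_coe.mpr hxB) (Finset.mem_coe.mpr hf) hx
      subst hxf
      have htr := basis_transversal hM hnd hB'
      obtain ⟨u, hu, hcu⟩ := htr.2 (cls x)
      rcases Finset.mem_symmDiff.mp hu with ⟨huB, huA⟩ | ⟨huA, huB⟩
      · have : u = x := hB.1.1 (Finset.mem_coe.mpr huB) (Finset.mem_coe.mpr hf) hcu
        subst this
        exact huA (by simp)
      · simp only [Finset.mem_insert, Finset.mem_singleton] at huA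
        rcases huA with rfl | rfl | rfl | rfl
        · exact huB hbω
        · exact hfi (hbui.symm.trans hcu).symm
        · exact huB hf
        · exact huB hf
    · by_contra hfC
      have hCB' : C ⊆ symmDiff B ({bω, bu, f, x} : Finset U) := by
        intro c hc
        rw [Finset.mem_symmDiff]
        by_cases hcbu : c = bu
        · subst hcbu
          exact Or.inr ⟨by simp, hbuB⟩
        · obtain ⟨hcB, hcbω⟩ := hCB c hc hcbu
          refine Or.inl ⟨hcB, ?_⟩
          simp only [Finset.mem_insert, Finset.mem_singleton]
          push_neg
          exact ⟨hcbω, hcbu, fun h => hfC (h ▸ hc), fun h => hxB (h ▸ hcB)⟩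
      exact Nat.ne_of_lt hC.2.1 (indep_subset_s7 hM hB'.1 hCB').2
end

section
/- Let Z be a non-degenerate multimatroid with a total order ≺ on its skew classes, and let B be a basis of Z. Then for all active skew classes ω, ω' (with respect to B), the element B_ω (the unique element of B ∩ ω) does not belong to the fundamental circuit C(B, ω'). -/
open Finset

variable {U ι : Type}

section Helpers
set_option linter.unusedSectionVars false
variable [DecidableEq U] [Fintype U] [DecidableEq ι] [Fintype ι]
variable {cls : U → ι} {r : Finset U → ℕ}

lemma subtrans_subset {S T : Finset U} (h : Subtransversal cls T) (hsub : S ⊆ T) :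
    Subtransversal cls S :=
  Set.InjOn.mono (by exact_mod_cast hsub) h

lemma mem_skewClass {x : U} {i : ι} : x ∈ skewClass cls i ↔ cls x = i := by
  simp [skewClass]

lemma subtrans_insert {I : Finset U} {x : U} (hI : Subtransversal cls I)
    (hx : ∀ u ∈ I, cls u ≠ cls x) : Subtransversal cls (insert x I) := by
  intro a ha b hb hab
  simp only [Finset.coe_insert, Set.mem_insert_iff, Finset.mem_coe] at ha hb
  rcases ha with rfl | ha <;> rcases hb with rfl | hb
  · rfl
  · exact absurd hab.symm (hx b hb)
  · exact absurd hab (hx a ha)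
  · exact hI ha hb hab

lemma indep_subset_s9 (hM : IsMultimatroid cls r) {B S : Finset U}
    (hBt : Subtransversal cls B) (hBr : r B = B.card) (hsub : S ⊆ B) :
    r S = S.card := by
  have hS : Subtransversal cls S := subtrans_subset hBt hsub
  have h1 : r (S ∪ (B \ S)) + r (S ∩ (B \ S)) ≤ r S + r (B \ S) := by
    apply hM.submod
    rwa [Finset.union_sdiff_of_subset hsub]
  rw [Finset.union_sdiff_of_subset hsub, Finset.inter_sdiff_self] at h1
  have h2 : r (B \ S) ≤ (B \ S).card := hM.rank_le_card _ (subtrans_subset hBt (Finset.sdiff_subset))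
  have h3 : (B \ S).card = B.card - S.card := Finset.card_sdiff_of_subset hsub
  have h4 : S.card ≤ B.card := Finset.card_le_card hsub
  have h5 : r S ≤ S.card := hM.rank_le_card _ hS
  omega

lemma circuit_card_pos {C : Finset U} (hC : Circuit cls r C) : 0 < C.card :=
  lt_of_le_of_lt (Nat.zero_le _) hC.2.1

lemma rank_lt_of_circuit_subset (hM : IsMultimatroid cls r) {C A : Finset U}
    (hC : Circuit cls r C) (hA : Subtransversal cls A) (hsub : C ⊆ A) :
    r A + 1 ≤ A.card := by
  obtain ⟨e, he⟩ := Finset.card_pos.mp (circuit_card_pos hC)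
  have heA : e ∈ A := hsub he
  have hunion : (A \ {e}) ∪ C = A := by
    ext y; simp only [Finset.mem_union, Finset.mem_sdiff, Finset.mem_singleton]
    constructor
    · rintro (⟨h, _⟩ | h); exact h; exact hsub h
    · intro hy; by_cases hye : y = e
      · exact Or.inr (hye ▸ he)
      · exact Or.inl ⟨hy, hye⟩
  have hinter : (A \ {e}) ∩ C = C \ {e} := by
    ext y; simp only [Finset.mem_inter, Finset.mem_sdiff, Finset.mem_singleton]
    constructor
    · rintro ⟨⟨_, h2⟩, h3⟩; exact ⟨h3, h2⟩
    · rintro ⟨h1, h2⟩; exact ⟨⟨hsub h1, h2⟩, h1⟩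
  have h1 := hM.submod (A \ {e}) C (by rwa [hunion])
  rw [hunion, hinter] at h1
  have hCe : r (C \ {e}) = (C \ {e}).card := by
    have hlt : C \ {e} ⊂ C := Finset.sdiff_ssubset (Finset.singleton_subset_iff.mpr he) (Finset.singleton_nonempty e)
    have := hC.2.2 _ hlt
    have := hM.rank_le_card (C \ {e}) (subtrans_subset hC.1 (Finset.sdiff_subset (s := C) (t := {e})))
    omega
  have h2 : r (A \ {e}) ≤ (A \ {e}).card := hM.rank_le_card _ (subtrans_subset hA Finset.sdiff_subset)
  have h3 : (A \ {e}).card = A.card - 1 := by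
    rw [Finset.card_sdiff_of_subset (Finset.singleton_subset_iff.mpr heA), Finset.card_singleton]
  have h4 : (C \ {e}).card = C.card - 1 := by
    rw [Finset.card_sdiff_of_subset (Finset.singleton_subset_iff.mpr he), Finset.card_singleton]
  have h5 := hC.2.1
  have h6 : C.card ≤ A.card := Finset.card_le_card hsub
  have h7 : 0 < C.card := circuit_card_pos hC
  omega

lemma exists_circuit_of_dep :
    ∀ A : Finset U, Subtransversal cls A → r A < A.card → ∃ C, C ⊆ A ∧ Circuit cls r C := by
  intro A
  induction A using Finset.strongInduction with
  | _ A ih =>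
    intro hA hdep
    by_cases h : ∀ D ⊂ A, ¬ r D < D.card
    · exact ⟨A, Finset.Subset.refl A, hA, hdep, h⟩
    · push_neg at h
      obtain ⟨D, hDA, hD⟩ := h
      obtain ⟨C, hCD, hc⟩ := ih D hDA (subtrans_subset hA hDA.subset) hD
      exact ⟨C, hCD.trans hDA.subset, hc⟩

/-- Structure of a circuit contained in `B ∪ ω_{i'}` for `B` independent. -/
lemma circuit_fund_structure (hM : IsMultimatroid cls r) {B C : Finset U}
    (hBt : Subtransversal cls B) (hBr : r B = B.card) {i' : ι}
    (hC : Circuit cls r C) (hsub : C ⊆ B ∪ skewClass cls i') :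
    ∃ x ∈ C, x ∉ B ∧ cls x = i' ∧ ∀ y ∈ C, y ≠ x → y ∈ B ∧ cls y ≠ i' := by
  have hnotsub : ¬ C ⊆ B := by
    intro h
    have := indep_subset_s9 hM hBt hBr h
    have := hC.2.1
    omega
  obtain ⟨x, hxC, hxB⟩ := Finset.not_subset.mp hnotsub
  have hxcls : cls x = i' := by
    have := hsub hxC
    rw [Finset.mem_union, mem_skewClass] at this
    tauto
  refine ⟨x, hxC, hxB, hxcls, ?_⟩
  intro y hy hne
  have hy' := hsub hy
  rw [Finset.mem_union, mem_skewClass] at hy'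
  by_cases hcy : cls y = i'
  · exact absurd (hC.1 (Finset.mem_coe.mpr hy) (Finset.mem_coe.mpr hxC) (hcy.trans hxcls.symm)) hne
  · rcases hy' with h | h
    · exact ⟨h, hcy⟩
    · exact absurd h hcy

/-- auxiliary asymmetric step for uniqueness -/
lemma fund_unique_aux (hM : IsMultimatroid cls r) {B I : Finset U} {x : U}
    (hBt : Subtransversal cls B) (hBr : r B = B.card) (hIB : I ⊆ B) (hxB : x ∉ B)
    (hIx : Subtransversal cls (insert x I))
    {D1 D2 : Finset U} (h1 : Circuit cls r D1) (h2 : Circuit cls r D2)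
    (hs1 : D1 ⊆ insert x I) (hs2 : D2 ⊆ insert x I)
    (hne : ¬ D1 ⊆ D2) : False := by
  obtain ⟨e, heD1, heD2⟩ := Finset.not_subset.mp hne
  have hxmem : ∀ D : Finset U, Circuit cls r D → D ⊆ insert x I → x ∈ D := by
    intro D hD hsD
    by_contra hx
    have hDI : D ⊆ I := fun y hy => (Finset.mem_insert.mp (hsD hy)).resolve_left
      (fun h => hx (h ▸ hy))
    have := indep_subset_s9 hM hBt hBr (hDI.trans hIB)
    have := hD.2.1
    omega
  have hx1 : x ∈ D1 := hxmem D1 h1 hs1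
  have hUsub : D1 ∪ D2 ⊆ insert x I := Finset.union_subset hs1 hs2
  have hUt : Subtransversal cls (D1 ∪ D2) := subtrans_subset hIx hUsub
  have hsm := hM.submod D1 D2 hUt
  have hint : r (D1 ∩ D2) = (D1 ∩ D2).card := by
    have hss : D1 ∩ D2 ⊂ D1 := by
      refine ⟨Finset.inter_subset_left, fun h => heD2 ?_⟩
      exact (Finset.mem_inter.mp (h heD1)).2
    have := h1.2.2 _ hss
    have := hM.rank_le_card (D1 ∩ D2) (subtrans_subset h1.1 Finset.inter_subset_left)
    omega
  -- lower bound on r (D1 ∪ D2)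
  have hKsub : (D1 ∪ D2) \ {x} ⊆ I := by
    intro y hy
    rw [Finset.mem_sdiff, Finset.mem_singleton] at hy
    rcases Finset.mem_insert.mp (hUsub hy.1) with h | h
    · exact absurd h hy.2
    · exact h
  have hK : r ((D1 ∪ D2) \ {x}) = ((D1 ∪ D2) \ {x}).card :=
    indep_subset_s9 hM hBt hBr (hKsub.trans hIB)
  have hKle : r ((D1 ∪ D2) \ {x}) ≤ r (D1 ∪ D2) :=
    hM.mono _ _ hUt Finset.sdiff_subset
  have hxU : x ∈ D1 ∪ D2 := Finset.mem_union_left _ hx1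
  have hKcard : ((D1 ∪ D2) \ {x}).card = (D1 ∪ D2).card - 1 := by
    rw [Finset.card_sdiff_of_subset (Finset.singleton_subset_iff.mpr hxU), Finset.card_singleton]
  have hcards : (D1 ∪ D2).card + (D1 ∩ D2).card = D1.card + D2.card :=
    Finset.card_union_add_card_inter D1 D2
  have hU0 : 0 < (D1 ∪ D2).card := Finset.card_pos.mpr ⟨x, hxU⟩
  have hr1 := h1.2.1
  have hr2 := h2.2.1
  omega

/-- Uniqueness of the circuit contained in `B ∪ ω_{i'}` for `B` a basis (indep). -/
lemma fund_circuit_unique (hM : IsMultimatroid cls r) {B : Finset U}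
    (hBt : Subtransversal cls B) (hBr : r B = B.card)
    {i' : ι} {C1 C2 : Finset U} (h1 : Circuit cls r C1) (h2 : Circuit cls r C2)
    (hs1 : C1 ⊆ B ∪ skewClass cls i') (hs2 : C2 ⊆ B ∪ skewClass cls i') : C1 = C2 := by
  obtain ⟨x1, hx1C, hx1B, hx1cls, hrest1⟩ := circuit_fund_structure hM hBt hBr h1 hs1
  obtain ⟨x2, hx2C, hx2B, hx2cls, hrest2⟩ := circuit_fund_structure hM hBt hBr h2 hs2
  set I : Finset U := B \ skewClass cls i' with hIdef
  have hIB : I ⊆ B := Finset.sdiff_subset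
  have hIt : Subtransversal cls I := subtrans_subset hBt hIB
  have hIr : r I = I.card := indep_subset_s9 hM hBt hBr hIB
  have hIcls : ∀ u ∈ I, cls u ≠ i' := by
    intro u hu
    rw [hIdef, Finset.mem_sdiff] at hu
    exact fun h => hu.2 (mem_skewClass.mpr h)
  have hsub1 : C1 ⊆ insert x1 I := by
    intro y hy
    by_cases hyx : y = x1
    · exact hyx ▸ Finset.mem_insert_self _ _
    · obtain ⟨hyB, hycls⟩ := hrest1 y hy hyx
      exact Finset.mem_insert_of_mem (Finset.mem_sdiff.mpr ⟨hyB, fun h => hycls (mem_skewClass.mp h)⟩)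
  have hsub2 : C2 ⊆ insert x2 I := by
    intro y hy
    by_cases hyx : y = x2
    · exact hyx ▸ Finset.mem_insert_self _ _
    · obtain ⟨hyB, hycls⟩ := hrest2 y hy hyx
      exact Finset.mem_insert_of_mem (Finset.mem_sdiff.mpr ⟨hyB, fun h => hycls (mem_skewClass.mp h)⟩)
  have hIx1 : Subtransversal cls (insert x1 I) :=
    subtrans_insert hIt (fun u hu => hx1cls ▸ hIcls u hu)
  have hIx2 : Subtransversal cls (insert x2 I) :=
    subtrans_insert hIt (fun u hu => hx2cls ▸ hIcls u hu)
  -- Step 1 : x1 = x2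
  have hxeq : x1 = x2 := by
    by_contra hne
    have hb1 : r (insert x1 I) + 1 ≤ (insert x1 I).card :=
      rank_lt_of_circuit_subset hM h1 hIx1 hsub1
    have hb2 : r (insert x2 I) + 1 ≤ (insert x2 I).card :=
      rank_lt_of_circuit_subset hM h2 hIx2 hsub2
    have hm1 : r I ≤ r (insert x1 I) := hM.mono _ _ hIx1 (Finset.subset_insert _ _)
    have hm2 : r I ≤ r (insert x2 I) := hM.mono _ _ hIx2 (Finset.subset_insert _ _)
    have hc1 : (insert x1 I).card = I.card + 1 :=
      Finset.card_insert_of_notMem (fun h => hx1B (hIB h))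
    have hc2 : (insert x2 I).card = I.card + 1 :=
      Finset.card_insert_of_notMem (fun h => hx2B (hIB h))
    have hR2 := hM.axiomR2 I x1 x2 hIt (hx1cls.trans hx2cls.symm) hne
      (fun u hu => hx1cls ▸ hIcls u hu)
    omega
  subst hxeq
  by_contra hne12
  by_cases h : C1 ⊆ C2
  · exact fund_unique_aux hM hBt hBr hIB hx1B hIx1 h2 h1 hsub2 hsub1
      (fun h' => hne12 (Finset.Subset.antisymm h h'))
  · exact fund_unique_aux hM hBt hBr hIB hx1B hIx1 h1 h2 hsub1 hsub2 h

end Helpers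


/-- if `ω` (= `i`) and `ω'` (= `i'`) are active skew classes with
respect to a basis `B`, then `B_ω ∉ C(B,ω')`. Here `C` is the fundamental circuit
of `ω'` (the unique circuit contained in `B ∪ ω'`). -/
theorem stmt_9 [DecidableEq U] [Fintype U] [DecidableEq ι] [Fintype ι] [LinearOrder ι]
    (cls : U → ι) (r : Finset U → ℕ) (hM : IsMultimatroid cls r)
    (hnd : Nondegenerate cls) (B : Finset U) (hB : MMBasis cls r B)
    (i i' : ι) (hi : Active cls r B i) (hi' : Active cls r B i')
    (bω : U) (hbω : bω ∈ B) (hbωi : cls bω = i)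
    (C : Finset U) (hC : Circuit cls r C) (hCsub : C ⊆ B ∪ skewClass cls i') :
    bω ∉ C := by
  intro hbC
  obtain ⟨⟨hBt, hBr⟩, -⟩ := hB
  obtain ⟨x', hx'C, hx'B, hx'cls, hrestC⟩ := circuit_fund_structure hM hBt hBr hC hCsub
  -- the activity witness for `i'` must be `C` itself
  obtain ⟨C', hC', hC'sub, m', hm'C, hm'cls, hC'min⟩ := hi'
  have hC'sub' : C' ⊆ B ∪ skewClass cls i' := by
    intro y hy
    by_cases h : y ∈ skewClass cls i'
    · exact Finset.mem_union_right _ h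
    · exact Finset.mem_union_left _ (hC'sub (Finset.mem_sdiff.mpr ⟨hy, h⟩))
  have hCeq : C' = C := fund_circuit_unique hM hBt hBr hC' hC hC'sub' hCsub
  subst hCeq
  have hmin : ∀ y ∈ C', i' ≤ cls y := hC'min
  have hbx' : bω ≠ x' := fun h => hx'B (h ▸ hbω)
  have hbclsne : cls bω ≠ i' := (hrestC bω hbC hbx').2
  have hii' : i' < i :=
    lt_of_le_of_ne (hbωi ▸ hmin bω hbC) (fun h => hbclsne (hbωi.trans h.symm))
  -- activity witness for `i`
  obtain ⟨C₁, hC₁, hC₁sub, m, hmC, hmcls, hC₁min⟩ := hi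
  have hrest1 : ∀ y ∈ C₁, y ≠ m → y ∈ B ∧ cls y ≠ i := by
    intro y hy hne
    have hcy : cls y ≠ i := fun h => hne
      (hC₁.1 (Finset.mem_coe.mpr hy) (Finset.mem_coe.mpr hmC) (h.trans hmcls.symm))
    exact ⟨hC₁sub (Finset.mem_sdiff.mpr ⟨hy, fun h => hcy (mem_skewClass.mp h)⟩), hcy⟩
  have hmB : m ∉ B := by
    intro hmB
    have hsubB : C₁ ⊆ B := fun y hy => by
      by_cases h : y = m
      · exact h ▸ hmB
      · exact (hrest1 y hy h).1
    have h1 := indep_subset_s9 hM hBt hBr hsubB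
    have h2 := hC₁.2.1
    omega
  have hmbω : m ≠ bω := fun h => hmB (h ▸ hbω)
  have hbC₁ : bω ∉ C₁ := fun h => (hrest1 bω h (fun he => hmbω he.symm)).2 hbωi
  have hC₁i' : ∀ y ∈ C₁, cls y ≠ i' := fun y hy h =>
    absurd (hC₁min y hy) (by rw [h]; exact not_le.mpr hii')
  -- the exchange construction
  set I : Finset U := B \ skewClass cls i' with hIdef
  have hIB : I ⊆ B := Finset.sdiff_subset
  have hIt : Subtransversal cls I := subtrans_subset hBt hIB
  have hIcls : ∀ u ∈ I, cls u ≠ i' := by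
    intro u hu
    rw [hIdef, Finset.mem_sdiff] at hu
    exact fun h => hu.2 (mem_skewClass.mpr h)
  have hDt : Subtransversal cls (insert x' I) :=
    subtrans_insert hIt (fun u hu => by rw [hx'cls]; exact hIcls u hu)
  have hCD : C' ⊆ insert x' I := by
    intro y hy
    by_cases hyx : y = x'
    · exact hyx ▸ Finset.mem_insert_self _ _
    · obtain ⟨hyB, hycls⟩ := hrestC y hy hyx
      exact Finset.mem_insert_of_mem
        (Finset.mem_sdiff.mpr ⟨hyB, fun h => hycls (mem_skewClass.mp h)⟩)
  have hbD : bω ∈ insert x' I := hCD hbC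
  set B'' : Finset U := (insert x' I).erase bω with hB''def
  have hB''sub : B'' ⊆ insert x' I := Finset.erase_subset _ _
  have hB''t : Subtransversal cls B'' := subtrans_subset hDt hB''sub
  have hB''r : r B'' = B''.card := by
    by_contra hne
    have hlt : r B'' < B''.card := lt_of_le_of_ne (hM.rank_le_card _ hB''t) hne
    obtain ⟨C₂, hC₂sub, hC₂⟩ := exists_circuit_of_dep B'' hB''t hlt
    have hC₂B : C₂ ⊆ B ∪ skewClass cls i' := by
      intro y hy
      rcases Finset.mem_insert.mp (hB''sub (hC₂sub hy)) with h | h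
      · exact Finset.mem_union_right _ (h ▸ mem_skewClass.mpr hx'cls)
      · exact Finset.mem_union_left _ (hIB h)
    have heq : C₂ = C' := fund_circuit_unique hM hBt hBr hC₂ hC hC₂B hCsub
    exact Finset.notMem_erase bω _ (hC₂sub (heq ▸ hbC))
  have hins : insert bω B'' = insert x' I := Finset.insert_erase hbD
  have hDdep : r (insert x' I) + 1 ≤ (insert x' I).card :=
    rank_lt_of_circuit_subset hM hC hDt hCD
  have hB''i : ∀ u ∈ B'', cls u ≠ i := by
    intro u hu h
    rcases Finset.mem_insert.mp (hB''sub hu) with rfl | h'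
    · exact absurd (hx'cls.symm.trans h) (ne_of_lt hii')
    · have hub : u = bω := hBt (Finset.mem_coe.mpr (hIB h')) (Finset.mem_coe.mpr hbω)
        (h.trans hbωi.symm)
      exact Finset.ne_of_mem_erase hu hub
  have hmB'' : m ∉ B'' := by
    intro h
    rcases Finset.mem_insert.mp (hB''sub h) with rfl | h'
    · exact absurd (hmcls.symm.trans hx'cls) (ne_of_gt hii')
    · exact hmB (hIB h')
  have hEt : Subtransversal cls (insert m B'') :=
    subtrans_insert hB''t (fun u hu => by rw [hmcls]; exact hB''i u hu)
  have hC₁E : C₁ ⊆ insert m B'' := by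
    intro y hy
    by_cases h : y = m
    · exact h ▸ Finset.mem_insert_self _ _
    · obtain ⟨hyB, hyi⟩ := hrest1 y hy h
      apply Finset.mem_insert_of_mem
      rw [hB''def]
      refine Finset.mem_erase.mpr ⟨fun he => hbC₁ (he ▸ hy), ?_⟩
      exact Finset.mem_insert_of_mem
        (Finset.mem_sdiff.mpr ⟨hyB, fun hh => hC₁i' y hy (mem_skewClass.mp hh)⟩)
  have hEdep : r (insert m B'') + 1 ≤ (insert m B'').card :=
    rank_lt_of_circuit_subset hM hC₁ hEt hC₁E
  have hEcard : (insert m B'').card = B''.card + 1 := Finset.card_insert_of_notMem hmB''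
  have hDcard : (insert x' I).card = B''.card + 1 := by
    rw [← hins]; exact Finset.card_insert_of_notMem (Finset.notMem_erase _ _)
  have hR2 := hM.axiomR2 B'' m bω hB''t (hmcls.trans hbωi.symm) hmbω
    (fun u hu => by rw [hmcls]; exact hB''i u hu)
  rw [hins] at hR2
  omega
end
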